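/- arXiv:2508.19706 — 2 statements merged into one kernel-verified Lean document; each statement's English description precedes it below -/
import Mathlib

section
/- Let p be a prime, a, d ≥ 1 integers, G = (ℤ/p^aℤ)^d, and R an integral domain containing a primitive p^a-th root of unity. Let h : G → R be any function. Then for every g ∈ G, the sum over all additive characters ψ of G with values in R of exact order p^a of Σ_{w ∈ G} ψ(w)·h(g+w) equals p^{ad}·h(g) − p^{(a−1)d}·Σ_{w ∈ G, p·w = 0} h(g+w), where the integer coefficients are interpreted in R via the canonical ring map ℤ → R. -/
/-!
Fix a primitive `p^a`-th root of unity `ζ` and the character `χ t = ζ ^ t` of `ℤ/p^a`. Every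
character of `G = (ℤ/p^a)^d` is `w ↦ χ (x ⬝ᵥ w)` for a unique `x`, and it has exact order `p^a`
iff some coordinate of `x` is a unit. After swapping the sums it remains to add up
`χ (x ⬝ᵥ w)` over these `x`: this is the full orthogonality sum `p^{ad} [w = 0]` minus the sum
over `x ∈ (pℤ/p^a)^d`. The latter factors over the coordinates into sums of a character over
the subgroup `pℤ/p^a`, each equal to `p^{a-1} [p w_j = 0]`.
-/

open Finset

namespace AddChar

variable {A M R ι : Type*}

lemma map_sum_eq_prod [AddCommMonoid A] [CommMonoid M] (ψ : AddChar A M) (s : Finset ι)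
    (f : ι → A) : ψ (∑ i ∈ s, f i) = ∏ i ∈ s, ψ (f i) := by
  induction s using Finset.cons_induction <;> simp [*, map_add_eq_mul]

lemma sum_addSubgroup_eq_ite [AddGroup A] [Fintype A] [CommRing R] [IsDomain R]
    (ψ : AddChar A R) (K : AddSubgroup A) [DecidablePred (· ∈ K)]
    [Decidable (∀ t ∈ K, ψ t = 1)] :
    ∑ t ∈ univ.filter (· ∈ K), ψ t = if ∀ t ∈ K, ψ t = 1 then (Nat.card K : R) else 0 := by
  classical
  rw [sum_subtype (p := (· ∈ K)) _ (fun _ => by simp) ψ, Nat.card_eq_fintype_card]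
  refine (sum_eq_ite (ψ.compAddMonoidHom K.subtype)).trans (if_congr ?_ rfl rfl)
  simp [eq_zero_iff]

variable [CommRing R] {N : ℕ} [NeZero N] {ζ : R}

lemma eq_of_apply_single_one [DecidableEq ι] [Fintype ι] [CommMonoid M]
    {ψ φ : AddChar (ι → ZMod N) M} (h : ∀ j, ψ (Pi.single j 1) = φ (Pi.single j 1)) :
    ψ = φ := by
  ext w
  rw [← univ_sum_single w, map_sum_eq_prod, map_sum_eq_prod]
  refine prod_congr rfl fun j _ => ?_
  rw [← ZMod.natCast_zmod_val (w j), ← nsmul_one, Pi.single_smul', map_nsmul_eq_pow,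
    map_nsmul_eq_pow, h]

lemma zmodChar_injective (hζ : IsPrimitiveRoot ζ N) :
    Function.Injective (zmodChar N hζ.pow_eq_one) := fun s t hst =>
  ZMod.val_injective N (hζ.pow_inj (ZMod.val_lt s) (ZMod.val_lt t) hst)

lemma isPrimitiveRoot_zmodChar_iff (hζ : IsPrimitiveRoot ζ N) (t : ZMod N) :
    IsPrimitiveRoot (zmodChar N hζ.pow_eq_one t) N ↔ IsUnit t := by
  rw [zmodChar_apply, hζ.pow_iff_coprime (NeZero.pos N), ← ZMod.isUnit_iff_coprime,
    ZMod.natCast_zmod_val]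

end AddChar

namespace ZMod

lemma mem_zmultiples_iff_dvd {n : ℕ} {c t : ZMod n} :
    t ∈ AddSubgroup.zmultiples c ↔ c ∣ t := by
  refine AddSubgroup.mem_zmultiples_iff.trans ⟨?_, ?_⟩
  · rintro ⟨k, rfl⟩
    exact ⟨k, by rw [zsmul_eq_mul, mul_comm]⟩
  · rintro ⟨s, rfl⟩
    exact ⟨s.cast, by rw [zsmul_eq_mul, intCast_zmod_cast, mul_comm]⟩

variable {p a : ℕ} [Fact p.Prime]

lemma isUnit_iff_not_prime_dvd_pow (ha : 0 < a) (t : ZMod (p ^ a)) :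
    IsUnit t ↔ ¬ (p : ZMod (p ^ a)) ∣ t := by
  refine ⟨fun ht hpt => prime_natCast_not_isUnit_pow Fact.out ha (isUnit_of_dvd_unit hpt ht),
    fun hpt => ?_⟩
  rw [← natCast_zmod_val t, isUnit_natCast_iff_not_dvd_pow Fact.out ha]
  exact fun hdvd => hpt (natCast_zmod_val t ▸ Nat.cast_dvd_cast hdvd)

lemma addOrderOf_prime_natCast_pow (ha : 0 < a) :
    addOrderOf (p : ZMod (p ^ a)) = p ^ (a - 1) := by
  rw [addOrderOf_coe p (NeZero.ne _), Nat.gcd_eq_right (dvd_pow_self p ha.ne')]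
  exact Nat.div_eq_of_eq_mul_left (Fact.out : p.Prime).pos
    (by rw [← pow_succ, Nat.sub_add_cancel ha])

lemma exists_isUnit_dotProduct_iff {ι : Type*} [Fintype ι] [DecidableEq ι] (ha : 0 < a)
    (x : ι → ZMod (p ^ a)) : (∃ w, IsUnit (x ⬝ᵥ w)) ↔ ∃ j, IsUnit (x j) := by
  refine ⟨fun ⟨w, hw⟩ => ?_, fun ⟨j, hj⟩ => ⟨Pi.single j 1, by simpa using hj⟩⟩
  by_contra! h
  simp only [isUnit_iff_not_prime_dvd_pow ha, not_not] at h hw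
  exact hw (dvd_sum fun j _ => (h j).mul_right _)

end ZMod

section DotChar

variable {ι A R : Type*} [Fintype ι] [CommRing A] [CommRing R]

def dotChar (χ : AddChar A R) (x : ι → A) : AddChar (ι → A) R where
  toFun w := χ (x ⬝ᵥ w)
  map_zero_eq_one' := by simp
  map_add_eq_mul' w w' := by rw [dotProduct_add, AddChar.map_add_eq_mul]

@[simp]
lemma dotChar_apply (χ : AddChar A R) (x w : ι → A) : dotChar χ x w = χ (x ⬝ᵥ w) := rfl

lemma dotChar_injective [DecidableEq ι] {χ : AddChar A R} (hχ : Function.Injective χ) :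
    Function.Injective (dotChar (ι := ι) χ) := by
  intro x y hxy
  funext j
  simpa using hχ (DFunLike.congr_fun hxy (Pi.single j 1))

lemma sum_piFinset_dotChar_apply [DecidableEq ι] [Fintype A] [IsDomain R] {χ : AddChar A R}
    (hχ : Function.Injective χ) (K : AddSubgroup A) [DecidablePred (· ∈ K)] (w : ι → A)
    [Decidable (∀ j, ∀ t ∈ K, t * w j = 0)] :
    ∑ x ∈ Fintype.piFinset fun _ => univ.filter (· ∈ K), dotChar χ x w
      = if ∀ j, ∀ t ∈ K, t * w j = 0 then (Nat.card K : R) ^ Fintype.card ι else 0 := by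
  classical
  have hcoord (j : ι) : ∑ t ∈ univ.filter (· ∈ K), χ (t * w j)
      = if ∀ t ∈ K, t * w j = 0 then (Nat.card K : R) else 0 := by
    simpa only [AddChar.mulShift_apply, mul_comm (w j), hχ.eq_iff' χ.map_zero_eq_one] using
      (AddChar.mulShift χ (w j)).sum_addSubgroup_eq_ite K
  calc ∑ x ∈ Fintype.piFinset fun _ => univ.filter (· ∈ K), dotChar χ x w
      = ∏ j, ∑ t ∈ univ.filter (· ∈ K), χ (t * w j) := by
        simp only [prod_univ_sum, dotChar_apply, dotProduct, AddChar.map_sum_eq_prod]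
    _ = _ := by simp_rw [hcoord, Fintype.prod_ite_zero, prod_const, card_univ]

end DotChar

section ZModDotChar

variable {ι R : Type*} [Fintype ι] [DecidableEq ι] [CommRing R] [IsDomain R] {ζ : R}

lemma exists_dotChar_zmodChar_eq {N : ℕ} [NeZero N] (hζ : IsPrimitiveRoot ζ N)
    (ψ : AddChar (ι → ZMod N) R) : ∃ x, dotChar (AddChar.zmodChar N hζ.pow_eq_one) x = ψ := by
  have hroot (j : ι) : ∃ m : ℕ, ζ ^ m = ψ (Pi.single j 1) := by
    obtain ⟨m, -, hm⟩ := hζ.eq_pow_of_pow_eq_one (ξ := ψ (Pi.single j 1)) (by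
      rw [← AddChar.map_nsmul_eq_pow, ← Pi.single_smul', nsmul_one, ZMod.natCast_self,
        Pi.single_zero, AddChar.map_zero_eq_one])
    exact ⟨m, hm⟩
  choose m hm using hroot
  refine ⟨fun j => m j, AddChar.eq_of_apply_single_one fun j => ?_⟩
  rw [dotChar_apply, dotProduct_single, mul_one, AddChar.zmodChar_apply', hm]

lemma sum_piFinset_dvd_dotChar_apply {N : ℕ} [NeZero N] (hζ : IsPrimitiveRoot ζ N)
    (c : ZMod N) [DecidablePred (c ∣ ·)] (w : ι → ZMod N) :
    ∑ x ∈ Fintype.piFinset fun _ => univ.filter (c ∣ ·),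
        dotChar (AddChar.zmodChar N hζ.pow_eq_one) x w
      = if c • w = 0 then (addOrderOf c : R) ^ Fintype.card ι else 0 := by
  classical
  have hK : univ.filter (c ∣ ·) = univ.filter (· ∈ AddSubgroup.zmultiples c) := by
    simp only [ZMod.mem_zmultiples_iff_dvd]
  rw [hK, sum_piFinset_dotChar_apply (AddChar.zmodChar_injective hζ), Nat.card_zmultiples]
  refine if_congr ⟨fun h => funext fun j => ?_, fun h j t ht => ?_⟩ rfl rfl
  · simpa using h j c (AddSubgroup.mem_zmultiples c)
  · obtain ⟨s, rfl⟩ := ZMod.mem_zmultiples_iff_dvd.mp ht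
    rw [mul_comm c, mul_assoc, ← smul_eq_mul c, ← Pi.smul_apply, h, Pi.zero_apply, mul_zero]

variable {p a : ℕ} [Fact p.Prime]

lemma setOf_exists_isPrimitiveRoot_eq_image (ha : 0 < a) (hζ : IsPrimitiveRoot ζ (p ^ a)) :
    {ψ : AddChar (ι → ZMod (p ^ a)) R | ∃ g₀, IsPrimitiveRoot (ψ g₀) (p ^ a)}
      = dotChar (AddChar.zmodChar (p ^ a) hζ.pow_eq_one) '' {x | ∃ j, IsUnit (x j)} := by
  ext ψ
  obtain ⟨x, rfl⟩ := exists_dotChar_zmodChar_eq hζ ψ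
  simp only [Set.mem_ofPred_eq, dotChar_apply, AddChar.isPrimitiveRoot_zmodChar_iff hζ,
    ZMod.exists_isUnit_dotProduct_iff ha,
    (dotChar_injective (AddChar.zmodChar_injective hζ)).mem_set_image]

lemma sum_exists_isUnit_dotChar_apply (ha : 0 < a) (hζ : IsPrimitiveRoot ζ (p ^ a))
    [DecidablePred fun x : ι → ZMod (p ^ a) => ∃ j, IsUnit (x j)] (w : ι → ZMod (p ^ a)) :
    ∑ x ∈ univ.filter (fun x => ∃ j, IsUnit (x j)),
        dotChar (AddChar.zmodChar (p ^ a) hζ.pow_eq_one) x w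
      = (if w = 0 then ((p ^ (a * Fintype.card ι) : ℕ) : R) else 0)
        - if p • w = 0 then ((p ^ ((a - 1) * Fintype.card ι) : ℕ) : R) else 0 := by
  classical
  have hnonunit : univ.filter (fun x : ι → ZMod (p ^ a) => ¬∃ j, IsUnit (x j))
      = Fintype.piFinset fun _ => univ.filter ((p : ZMod (p ^ a)) ∣ ·) := by
    ext x
    simp [Fintype.mem_piFinset, ZMod.isUnit_iff_not_prime_dvd_pow ha]
  have hall := sum_piFinset_dvd_dotChar_apply (ι := ι) hζ 1 w
  simp only [one_dvd, filter_true, Fintype.piFinset_univ, one_smul, ZMod.addOrderOf_one] at hall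
  have hsplit := sum_filter_add_sum_filter_not univ
    (fun x : ι → ZMod (p ^ a) => ∃ j, IsUnit (x j))
    (fun x => dotChar (AddChar.zmodChar (p ^ a) hζ.pow_eq_one) x w)
  rw [hnonunit, sum_piFinset_dvd_dotChar_apply hζ, ZMod.addOrderOf_prime_natCast_pow ha,
    Nat.cast_smul_eq_nsmul] at hsplit
  rw [eq_sub_iff_add_eq, pow_mul, pow_mul, Nat.cast_pow (p ^ a), Nat.cast_pow (p ^ (a - 1)),
    hsplit, hall]

end ZModDotChar

theorem sum_addChar_exact_order_smul_general (p a d : ℕ) [Fact p.Prime] (ha : 1 ≤ a)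
    (R : Type*) [CommRing R] [IsDomain R]
    (hroot : ∃ ζ : R, IsPrimitiveRoot ζ (p ^ a))
    (h : (Fin d → ZMod (p ^ a)) → R) (g : Fin d → ZMod (p ^ a)) :
    (∑ᶠ ψ ∈ {ψ : AddChar (Fin d → ZMod (p ^ a)) R |
        ∃ g₀, IsPrimitiveRoot (ψ g₀) (p ^ a)},
      ∑ w : Fin d → ZMod (p ^ a), ψ w * h (g + w))
    = ((p ^ (a * d) : ℕ) : R) * h g
      - ((p ^ ((a - 1) * d) : ℕ) : R) *
          ∑ w ∈ Finset.univ.filter (fun w : Fin d → ZMod (p ^ a) => p • w = 0),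
            h (g + w) := by
  classical
  obtain ⟨ζ, hζ⟩ := hroot
  rw [setOf_exists_isPrimitiveRoot_eq_image ha hζ,
    finsum_mem_image (dotChar_injective (AddChar.zmodChar_injective hζ)).injOn,
    ← coe_filter_univ, finsum_mem_coe_finset, sum_comm]
  simp_rw [← sum_mul, sum_exists_isUnit_dotChar_apply ha hζ, Fintype.card_fin, sub_mul, ite_mul,
    zero_mul, sum_sub_distrib, sum_ite_eq', mem_univ, if_true, add_zero, ← sum_filter, mul_sum]

/-- Lemma 4.19 (`ave1`): for `G = (ℤ/p^aℤ)^d`, an integral domain `R` containing a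
primitive `p^a`-th root of unity, and any function `h : G → R`, the sum over all additive
characters `ψ` of `G` of exact order `p^a` of `Σ_{w ∈ G} ψ(w)·h(g+w)` equals
`p^{ad}·h(g) − p^{(a−1)d}·Σ_{w ∈ G, p·w = 0} h(g+w)`. -/
theorem sum_addChar_exact_order_smul (p a d : ℕ) [Fact p.Prime] (ha : 1 ≤ a) (hd : 1 ≤ d)
    (R : Type*) [CommRing R] [IsDomain R]
    (hroot : ∃ ζ : R, IsPrimitiveRoot ζ (p ^ a))
    (h : (Fin d → ZMod (p ^ a)) → R) (g : Fin d → ZMod (p ^ a)) :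
    (∑ᶠ ψ ∈ {ψ : AddChar (Fin d → ZMod (p ^ a)) R |
        ∃ g₀, IsPrimitiveRoot (ψ g₀) (p ^ a)},
      ∑ w : Fin d → ZMod (p ^ a), ψ w * h (g + w))
    = ((p ^ (a * d) : ℕ) : R) * h g
      - ((p ^ ((a - 1) * d) : ℕ) : R) *
          ∑ w ∈ Finset.univ.filter (fun w : Fin d → ZMod (p ^ a) => p • w = 0),
            h (g + w) :=
  sum_addChar_exact_order_smul_general p a d ha R hroot h g
end

section
/- Let p be a prime and let k ⊆ E be an extension of finite fields whose characteristic is different from p. Assume k contains a primitive p-th root of unity, and if p = 2 assume moreover that k contains a primitive 4-th root of unity. Let ζ ∈ E satisfy ζ^(p^m) = 1 for some m ≥ 0. Then: if ζ does not lie in (the image of) k, the field trace Tr_{E/k}(ζ) equals 0; and if ζ lies in k, then Tr_{E/k}(ζ) = [E:k]·ζ. -/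
/-!
Let `q = |k|` and `p ^ t ‖ q - 1`. The roots of unity in `k` give `t ≥ 1`, and `t ≥ 2` when
`p = 2`, which is exactly what lifting the exponent needs. If `ζ ∉ k` has order `p ^ s`, then
`s > t`, and `M = q ^ p ^ (s - 1 - t)` satisfies `p ^ (s - 1) ‖ M - 1`. So the power
`σ = Frob_q ^ p ^ (s - 1 - t)` of the Frobenius sends `ζ` to `u * ζ`, where `u = ζ ^ (M - 1)` is
a nontrivial `p`-th root of unity and hence lies in `k`. Since the trace is `σ`-invariant,
`Tr ζ = u * Tr ζ`, so `Tr ζ = 0`.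
-/

theorem padicValNat.pow_prime_pow_sub_one {p q : ℕ} [hp : Fact p.Prime] (hq : 1 < q)
    (hpq : p ∣ q - 1) (h4 : p = 2 → 4 ∣ q - 1) (n : ℕ) :
    padicValNat p (q ^ p ^ n - 1) = padicValNat p (q - 1) + n := by
  have hpq' : ¬ p ∣ q := fun h ↦ hp.out.one_lt.ne'
    (Nat.dvd_one.mp (by simpa [Nat.sub_sub_self hq.le] using Nat.dvd_sub h hpq))
  rcases hp.out.eq_two_or_odd' with rfl | hodd
  · have h4 := h4 rfl
    rcases n.eq_zero_or_pos with rfl | hn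
    · simp
    have hne : q + 1 ≠ 0 := by omega
    have h1 : padicValNat 2 (q + 1) = 1 := by
      have := (padicValNat_dvd_iff_le (p := 2) hne (n := 1)).mp (by omega)
      have := (padicValNat_dvd_iff_le (p := 2) hne (n := 2)).not.mp (by omega)
      omega
    have := padicValNat.pow_two_sub_one hq hpq' (pow_ne_zero n two_ne_zero)
      ((Nat.even_pow' hn.ne').mpr even_two)
    rw [h1, padicValNat.prime_pow] at this
    omega
  · simpa [padicValNat.prime_pow] using
      padicValNat.pow_sub_pow hodd hq (by simpa using hpq) hpq' (pow_ne_zero n hp.out.ne_zero)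

theorem orderOf_pow_eq_prime_of_padicValNat {G : Type*} [Monoid G] {ζ : G} {p s e : ℕ}
    [Fact p.Prime] (hζ : orderOf ζ = p ^ s) (he : e ≠ 0) (hv : padicValNat p e + 1 = s) :
    orderOf (ζ ^ e) = p := by
  refine orderOf_eq_prime ?_ ?_
  · rw [← pow_mul, ← orderOf_dvd_iff_pow_eq_one, hζ, ← hv, pow_succ]
    exact Nat.mul_dvd_mul_right pow_padicValNat_dvd p
  · rw [Ne, ← orderOf_dvd_iff_pow_eq_one, hζ, ← hv]
    exact pow_succ_padicValNat_not_dvd he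

theorem Algebra.trace_eq_zero_of_algEquiv_apply_eq_smul {K L : Type*} [CommRing K] [IsDomain K]
    [CommRing L] [Algebra K L] (σ : L ≃ₐ[K] L) {x : L} {c : K} (hc : c ≠ 1) (h : σ x = c • x) :
    Algebra.trace K L x = 0 := by
  have := Algebra.trace_eq_of_algEquiv σ x
  rw [h, map_smul, smul_eq_mul, mul_left_eq_self₀] at this
  exact this.resolve_left hc

theorem IsPrimitiveRoot.mem_range_algebraMap {K L : Type*} [Field K] [CommRing L] [IsDomain L]
    [Algebra K L] {n : ℕ} [NeZero n] {ω : K} (hω : IsPrimitiveRoot ω n) {x : L}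
    (hx : x ^ n = 1) : x ∈ Set.range (algebraMap K L) := by
  obtain ⟨i, -, rfl⟩ := (hω.map_of_injective (algebraMap K L).injective).eq_pow_of_pow_eq_one hx
  exact ⟨ω ^ i, map_pow _ _ _⟩

theorem IsPrimitiveRoot.dvd_card_sub_one {K : Type*} [Field K] [Fintype K] {ω : K} {n : ℕ}
    [NeZero n] (hω : IsPrimitiveRoot ω n) : n ∣ Fintype.card K - 1 :=
  hω.dvd_of_pow_eq_one _ (FiniteField.pow_card_sub_one_eq_one ω (hω.ne_zero (NeZero.ne n)))

namespace FiniteField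

variable {K L : Type*} [Field K] [Fintype K] [Field L] [Finite L] [Algebra K L]

theorem frobeniusAlgEquivOfAlgebraic_pow_apply (n : ℕ) (x : L) :
    (frobeniusAlgEquivOfAlgebraic K L ^ n) x = x ^ Fintype.card K ^ n := by
  rw [AlgEquiv.coe_pow, coe_frobeniusAlgEquivOfAlgebraic_iterate]

theorem mem_range_algebraMap_of_pow_card_sub_one_eq_one {x : L}
    (hx : x ^ (Fintype.card K - 1) = 1) : x ∈ Set.range (algebraMap K L) := by
  have hfix : x ^ Fintype.card K = x := by
    rw [← Nat.sub_add_cancel Fintype.card_pos, pow_succ, hx, one_mul]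
  refine (IsGalois.mem_range_algebraMap_iff_fixed x).2 fun σ ↦ ?_
  obtain ⟨n, rfl⟩ := (bijective_frobeniusAlgEquivOfAlgebraic_pow K L).2 σ
  rw [AlgEquiv.coe_pow]
  exact Function.iterate_fixed hfix n

end FiniteField

open FiniteField in
theorem trace_pow_prime_root_general (p : ℕ) (hp : p.Prime)
    (k E : Type*) [Field k] [Field E] [Finite k] [Finite E] [Algebra k E]
    (hroot : ∃ ω : k, IsPrimitiveRoot ω p)
    (hroot4 : p = 2 → ∃ ω : k, IsPrimitiveRoot ω 4)
    (ζ : E) (m : ℕ) (hζ : ζ ^ p ^ m = 1) :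
    (ζ ∉ Set.range (algebraMap k E) → Algebra.trace k E ζ = 0) ∧
    (∀ x : k, algebraMap k E x = ζ →
      Algebra.trace k E ζ = Module.finrank k E • x) := by
  refine ⟨fun hζk ↦ ?_, fun x hx ↦ by rw [← hx, Algebra.trace_algebraMap]⟩
  have := Fintype.ofFinite k
  have := Fact.mk hp
  obtain ⟨ω, hω⟩ := hroot
  obtain ⟨s, -, hs⟩ := (Nat.dvd_prime_pow hp).mp (orderOf_dvd_of_pow_eq_one hζ)
  set t := padicValNat p (Fintype.card k - 1)
  have hts : t < s := by
    by_contra! hst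
    exact hζk <| mem_range_algebraMap_of_pow_card_sub_one_eq_one <|
      orderOf_dvd_iff_pow_eq_one.mp <| hs ▸ (pow_dvd_pow p hst).trans pow_padicValNat_dvd
  set M := Fintype.card k ^ p ^ (s - 1 - t)
  have hM : 1 < M := Nat.one_lt_pow (pow_ne_zero _ hp.ne_zero) Fintype.one_lt_card
  have hvM : padicValNat p (M - 1) + 1 = s := by
    rw [padicValNat.pow_prime_pow_sub_one Fintype.one_lt_card hω.dvd_card_sub_one
      (fun h ↦ (hroot4 h).elim fun _ h4 ↦ h4.dvd_card_sub_one)]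
    omega
  have hord := orderOf_pow_eq_prime_of_padicValNat hs (by omega) hvM
  obtain ⟨c, hc⟩ := hω.mem_range_algebraMap (hord ▸ pow_orderOf_eq_one (ζ ^ (M - 1)))
  refine Algebra.trace_eq_zero_of_algEquiv_apply_eq_smul
    (frobeniusAlgEquivOfAlgebraic k E ^ p ^ (s - 1 - t)) (c := c) ?_ ?_
  · rintro rfl
    rw [map_one, eq_comm, ← orderOf_eq_one_iff, hord] at hc
    exact hp.ne_one hc
  · rw [frobeniusAlgEquivOfAlgebraic_pow_apply, Algebra.smul_def, hc, ← pow_succ,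
      Nat.sub_add_cancel hM.le]

/-- Trace evaluation (equation `eqt`) for `p`-power roots of unity, from the proof of
Theorem 4.11 (`T:b.W`): if `k ⊆ E` is an extension of finite fields of characteristic
`≠ p`, `k` contains a primitive `p`-th root of unity (and a primitive 4-th root of unity
when `p = 2`), and `ζ ∈ E` is a `p`-power root of unity, then `Tr_{E/k}(ζ) = 0` when
`ζ ∉ k`, while `Tr_{E/k}(ζ) = [E:k]·ζ` when `ζ ∈ k`. -/
theorem trace_pow_prime_root (p : ℕ) (hp : p.Prime)
    (k E : Type*) [Field k] [Field E] [Finite k] [Finite E] [Algebra k E]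
    (hchar : ringChar k ≠ p)
    (hroot : ∃ ω : k, IsPrimitiveRoot ω p)
    (hroot4 : p = 2 → ∃ ω : k, IsPrimitiveRoot ω 4)
    (ζ : E) (m : ℕ) (hζ : ζ ^ p ^ m = 1) :
    (ζ ∉ Set.range (algebraMap k E) → Algebra.trace k E ζ = 0) ∧
    (∀ x : k, algebraMap k E x = ζ →
      Algebra.trace k E ζ = Module.finrank k E • x) :=
  trace_pow_prime_root_general p hp k E hroot hroot4 ζ m hζ
end
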